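/- Under the ring homomorphism φ : ℚ[t₁, ..., t₂ₙ] → ℚ[t₁, ..., tₙ] determined by t_{2i-1} ↦ t_i and t_{2i} ↦ t_i for 1 ≤ i ≤ n (the 'doubling' substitution), the k-th elementary symmetric polynomial e_k(t₁, ..., t₂ₙ) maps to a symmetric polynomial in t₁, ..., tₙ whose component in the span of e_k(t₁,...,tₙ) is a nonzero multiple of e_k, modulo the subring generated by e₁, ..., e_{k-1}, for each k ≤ n. -/

import Mathlib

/-!
Doubling the variables turns the multiset of variables `{t₁, …, tₙ}` into two copies of
itself, and `e_k` of a sum of multisets is `∑_{i+j=k} e_i e_j`. Of these products, the two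
with `i = 0` or `j = 0` give `2 e_k`; all the others are products of `e_i`, `e_j` with
`1 ≤ i, j < k`.
-/

open MvPolynomial

/-- The "doubling" substitution `ℚ[t₁,…,t₂ₙ] → ℚ[t₁,…,tₙ]`, sending each variable `t_j`
to `t_{⌈j/2⌉}`. -/
noncomputable def doublingMap (n : ℕ) :
    MvPolynomial (Fin (2 * n)) ℚ →ₐ[ℚ] MvPolynomial (Fin n) ℚ :=
  aeval fun j : Fin (2 * n) => X (⟨j.val / 2, by omega⟩ : Fin n)

open Finset

section MultisetEsymm

variable {R : Type*} [CommSemiring R]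

@[simp]
theorem Multiset.esymm_zero_right (s : Multiset R) : s.esymm 0 = 1 := by
  simp [Multiset.esymm]

@[simp]
theorem Multiset.esymm_zero_left_succ (k : ℕ) : (0 : Multiset R).esymm (k + 1) = 0 := by
  simp [Multiset.esymm, Multiset.powersetCard_zero_right]

theorem Multiset.esymm_cons_succ (a : R) (s : Multiset R) (k : ℕ) :
    (a ::ₘ s).esymm (k + 1) = s.esymm (k + 1) + a * s.esymm k := by
  simp [Multiset.esymm, Multiset.powersetCard_cons, Multiset.map_map, Multiset.sum_map_mul_left]

theorem Multiset.esymm_add (s t : Multiset R) (k : ℕ) :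
    (s + t).esymm k = ∑ p ∈ HasAntidiagonal.antidiagonal k, s.esymm p.1 * t.esymm p.2 := by
  induction s using Multiset.induction_on generalizing k with
  | empty =>
    cases k with
    | zero => simp
    | succ k => simp [Nat.sum_antidiagonal_succ]
  | cons a s ih =>
    cases k with
    | zero => simp
    | succ k =>
      rw [Multiset.cons_add, Multiset.esymm_cons_succ, ih, ih, Nat.sum_antidiagonal_succ,
        Nat.sum_antidiagonal_succ]
      simp only [Multiset.esymm_cons_succ, Multiset.esymm_zero_right, add_mul, sum_add_distrib,
        mul_sum, mul_assoc]
      ring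

end MultisetEsymm

theorem Fin.univ_val_map_div_two (n : ℕ) :
    (univ : Finset (Fin (2 * n))).val.map (fun j => (⟨j.val / 2, by omega⟩ : Fin n)) =
      univ.val + univ.val := by
  ext i
  rw [Multiset.count_add, Multiset.count_univ, Multiset.count_map, ← filter_val, card_val]
  have hfiber : ({j ∈ univ | i = ⟨j.val / 2, by omega⟩} : Finset (Fin (2 * n))) =
      {⟨2 * i, by omega⟩, ⟨2 * i + 1, by omega⟩} := by
    ext j
    simp only [mem_filter, mem_univ, true_and, mem_insert, mem_singleton, Fin.ext_iff]
    omega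
  rw [hfiber, card_pair (by simp [Fin.ext_iff])]

theorem doublingMap_esymm (n k : ℕ) :
    doublingMap n (esymm (Fin (2 * n)) ℚ k) =
      ∑ p ∈ antidiagonal k, esymm (Fin n) ℚ p.1 * esymm (Fin n) ℚ p.2 := by
  have h := congrArg (Multiset.map (X : Fin n → MvPolynomial (Fin n) ℚ))
    (Fin.univ_val_map_div_two n)
  rw [Multiset.map_map, Function.comp_def, Multiset.map_add] at h
  rw [doublingMap, aeval_esymm_eq_multiset_esymm, h, Multiset.esymm_add, esymm_eq_multiset_esymm]

theorem sum_antidiagonal_esymm_mul_esymm_sub_two_smul_mem (σ R : Type*) [Fintype σ] [CommRing R]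
    (k : ℕ) :
    ∑ p ∈ antidiagonal k, esymm σ R p.1 * esymm σ R p.2 - (2 : R) • esymm σ R k ∈
      Algebra.adjoin R {p : MvPolynomial σ R | ∃ j, 1 ≤ j ∧ j < k ∧ p = esymm σ R j} := by
  rcases k with _ | _ | m
  · simp [two_smul]
  · simp [Nat.sum_antidiagonal_succ, two_smul]
  · have hmem : ∀ j, 1 ≤ j → j < m + 2 → esymm σ R j ∈ Algebra.adjoin R
        {p : MvPolynomial σ R | ∃ j, 1 ≤ j ∧ j < m + 2 ∧ p = esymm σ R j} :=
      fun j h1 h2 => Algebra.subset_adjoin ⟨j, h1, h2, rfl⟩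
    rw [Nat.sum_antidiagonal_succ, Nat.sum_antidiagonal_succ']
    simp only [esymm_zero, one_mul, mul_one, two_smul, add_sub_add_left_eq_sub, add_sub_cancel_left]
    refine Subalgebra.sum_mem _ fun p hp => Subalgebra.mul_mem _ ?_ ?_ <;>
      · have hsum := mem_antidiagonal.mp hp
        exact hmem _ (by omega) (by omega)

theorem doubling_esymm_general (n k : ℕ) :
    ∃ c : ℚ, c ≠ 0 ∧
      doublingMap n (esymm (Fin (2 * n)) ℚ k) - c • esymm (Fin n) ℚ k ∈
        Algebra.adjoin ℚ {p : MvPolynomial (Fin n) ℚ | ∃ j, 1 ≤ j ∧ j < k ∧ p = esymm (Fin n) ℚ j} :=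
  ⟨2, two_ne_zero, doublingMap_esymm n k ▸ sum_antidiagonal_esymm_mul_esymm_sub_two_smul_mem _ _ k⟩

/-- Under the doubling substitution, the `k`-th elementary symmetric polynomial
`e_k(t₁,…,t₂ₙ)` maps to a nonzero multiple of `e_k(t₁,…,tₙ)` modulo the subring generated
by `e₁,…,e_{k-1}`, for all `1 ≤ k ≤ n`. -/
theorem doubling_esymm (n k : ℕ) (hk1 : 1 ≤ k) (hkn : k ≤ n) :
    ∃ c : ℚ, c ≠ 0 ∧
      doublingMap n (esymm (Fin (2 * n)) ℚ k) - c • esymm (Fin n) ℚ k ∈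
        Algebra.adjoin ℚ {p : MvPolynomial (Fin n) ℚ | ∃ j, 1 ≤ j ∧ j < k ∧ p = esymm (Fin n) ℚ j} :=
  doubling_esymm_general n k
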